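/- arXiv:2207.04274 — 3 statements merged into one kernel-verified Lean document; each statement's English description precedes it below -/
import Mathlib

section
/- Let V_ε be the Yamada–Watanabe approximation of |·| with 0 ≤ V_ε''(x) ≤ (2ε/|x|)·1_{[ε/e^{1/ε},ε]}(|x|). Suppose σ : ℝ → ℝ satisfies |σ(x) − σ(y)| ≤ K|x−y|^α with α ∈ [1/2, 1]. Then for all x, y ∈ ℝ, V_ε''(x−y)·(σ(x)−σ(y))² ≤ 2K²ε^{2α}. -/
/-!
On the support `|z| ∈ [ε/e^{1/ε}, ε]` of the bound on `V''`, the Hölder condition gives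
`(2ε/|z|)·K²|z|^{2α} = 2K²ε|z|^{2α-1} ≤ 2K²ε^{2α}`, since `2α - 1 ≥ 0` and `|z| ≤ ε`;
off the support `V'' ≤ 0`.
-/

open Set Real

theorem sq_le_mul_rpow_of_abs_le {a K r α : ℝ} (hr : 0 ≤ r) (h : |a| ≤ K * r ^ α) :
    a ^ 2 ≤ K ^ 2 * r ^ (2 * α) := by
  calc a ^ 2 = |a| ^ 2 := (sq_abs a).symm
    _ ≤ (K * r ^ α) ^ 2 := pow_le_pow_left₀ (abs_nonneg a) h 2
    _ = K ^ 2 * r ^ (2 * α) := by rw [mul_pow, mul_comm 2 α, rpow_mul hr, rpow_two]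

theorem div_mul_rpow_le_rpow {r ε p : ℝ} (hr : 0 ≤ r) (hrε : r ≤ ε) (hp : 1 ≤ p) :
    ε / r * r ^ p ≤ ε ^ p := by
  have hε : 0 ≤ ε := hr.trans hrε
  rcases hr.eq_or_lt with rfl | hr
  · simpa using rpow_nonneg hε p
  calc ε / r * r ^ p = ε * r ^ (p - 1) := by
        rw [rpow_sub hr, rpow_one]; ring
    _ ≤ ε * ε ^ (p - 1) := by gcongr
    _ = ε ^ p := by rw [← rpow_one_add' hε (by linarith)]; ring_nf

theorem yamada_watanabe_key_estimate_general (ε α K : ℝ) (hε : ε ∈ Set.Ioo (0:ℝ) 1)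
    (hα : α ∈ Set.Icc (1/2 : ℝ) 1)
    (Vpp : ℝ → ℝ)
    (hVpp : ∀ z : ℝ, Vpp z ≤
      (if |z| ∈ Set.Icc (ε / Real.exp (1/ε)) ε then 2 * ε / |z| else 0))
    (σ : ℝ → ℝ) (hσ : ∀ x y : ℝ, |σ x - σ y| ≤ K * |x - y| ^ α) :
    ∀ x y : ℝ, Vpp (x - y) * (σ x - σ y) ^ 2 ≤ 2 * K ^ 2 * ε ^ (2 * α) := by
  intro x y
  have hε0 : 0 ≤ ε := hε.1.le
  have hV := hVpp (x - y)
  by_cases hmem : |x - y| ∈ Icc (ε / exp (1 / ε)) ε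
  · rw [if_pos hmem] at hV
    calc Vpp (x - y) * (σ x - σ y) ^ 2 ≤ 2 * ε / |x - y| * (σ x - σ y) ^ 2 := by gcongr
      _ ≤ 2 * ε / |x - y| * (K ^ 2 * |x - y| ^ (2 * α)) := by
          gcongr; exact sq_le_mul_rpow_of_abs_le (abs_nonneg _) (hσ x y)
      _ = 2 * K ^ 2 * (ε / |x - y| * |x - y| ^ (2 * α)) := by ring
      _ ≤ 2 * K ^ 2 * ε ^ (2 * α) := by
          gcongr; exact div_mul_rpow_le_rpow (abs_nonneg _) hmem.2 (by linarith [hα.1])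
  · rw [if_neg hmem] at hV
    calc Vpp (x - y) * (σ x - σ y) ^ 2 ≤ 0 := mul_nonpos_of_nonpos_of_nonneg hV (sq_nonneg _)
      _ ≤ 2 * K ^ 2 * ε ^ (2 * α) := by positivity

/-- Key Yamada–Watanabe estimate: if `0 ≤ V'' ≤ (2ε/|z|)·1_{[ε/e^{1/ε},ε]}(|z|)` and
`σ` is `α`-Hölder with `α ∈ [1/2,1]`, then `V''(x−y)(σ(x)−σ(y))² ≤ 2K²ε^{2α}`. -/
theorem yamada_watanabe_key_estimate (ε α K : ℝ) (hε : ε ∈ Set.Ioo (0:ℝ) 1)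
    (hα : α ∈ Set.Icc (1/2 : ℝ) 1) (hK : 0 ≤ K)
    (Vpp : ℝ → ℝ)
    (hVpp0 : ∀ z, 0 ≤ Vpp z)
    (hVpp : ∀ z : ℝ, Vpp z ≤
      (if |z| ∈ Set.Icc (ε / Real.exp (1/ε)) ε then 2 * ε / |z| else 0))
    (σ : ℝ → ℝ) (hσ : ∀ x y : ℝ, |σ x - σ y| ≤ K * |x - y| ^ α) :
    ∀ x y : ℝ, Vpp (x - y) * (σ x - σ y) ^ 2 ≤ 2 * K ^ 2 * ε ^ (2 * α) :=
  yamada_watanabe_key_estimate_general ε α K hε hα Vpp hVpp σ hσ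
end

section
/- Let b : ℝ × P₁(ℝ) → ℝ satisfy (b(x,μ) − b(y,ν))·sgn(x−y) ≤ K_b(W₁(μ,ν) + |x−y|) for all x,y ∈ ℝ and μ,ν ∈ P₁(ℝ), where K_b ≥ 0. Define b̂ : ℝ^N → ℝ^N by b̂(x)_i = b(x_i, μ̃ᴺ_x) with μ̃ᴺ_x = (1/N)∑δ_{x_j}. Then ⟨b̂(x) − b̂(y), x − y⟩ ≤ 2K_b ∑_{i=1}^N |x_i − y_i|² for all x, y ∈ ℝ^N. -/
/-!
Multiplying the one-sided condition by `|x i - y i|` bounds each term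
`(b̂(x)_i - b̂(y)_i)(x_i - y_i)` by `K_b (W₁ + |x_i - y_i|) |x_i - y_i|`. The diagonal coupling
`(1/N) ∑ δ_(x_j, y_j)` bounds `W₁` by the mean of the `|x_j - y_j|`, and by Cauchy–Schwarz that
mean times `∑ |x_i - y_i|` is at most `∑ |x_i - y_i|²`.
-/

open MeasureTheory Set Real

noncomputable def W1 (μ ν : Measure ℝ) : ℝ :=
  sInf {c : ℝ | ∃ pi : Measure (ℝ × ℝ), IsProbabilityMeasure pi ∧
    pi.fst = μ ∧ pi.snd = ν ∧ c = ∫ p : ℝ × ℝ, |p.1 - p.2| ∂pi}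

def P1 (μ : Measure ℝ) : Prop :=
  IsProbabilityMeasure μ ∧ Integrable (fun z : ℝ => |z|) μ

noncomputable def empMeas (N : ℕ) (x : Fin N → ℝ) : Measure ℝ :=
  ((N : ENNReal))⁻¹ • ∑ i : Fin N, Measure.dirac (x i)

open scoped ENNReal

noncomputable def empiricalMeasure {α ι : Type*} [MeasurableSpace α] [Fintype ι] (z : ι → α) :
    Measure α :=
  (Fintype.card ι : ℝ≥0∞)⁻¹ • ∑ i, Measure.dirac (z i)

section EmpiricalMeasure

variable {α ι : Type*} [MeasurableSpace α] [Fintype ι]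

instance isProbabilityMeasure_empiricalMeasure [Nonempty ι] (z : ι → α) :
    IsProbabilityMeasure (empiricalMeasure z) := by
  constructor
  simp [empiricalMeasure, Measure.finsetSum_apply,
    ENNReal.inv_mul_cancel (Nat.cast_ne_zero.mpr Fintype.card_ne_zero)]

lemma integrable_empiricalMeasure [MeasurableSingletonClass α] [Nonempty ι]
    {E : Type*} [NormedAddCommGroup E] (f : α → E) (z : ι → α) :
    Integrable f (empiricalMeasure z) :=
  (integrable_finsetSum_measure.mpr fun _ _ => integrable_dirac enorm_lt_top).smul_measure
    (by simp)

lemma integral_empiricalMeasure [MeasurableSingletonClass α] [Nonempty ι]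
    {E : Type*} [NormedAddCommGroup E] [NormedSpace ℝ E] [CompleteSpace E] (f : α → E) (z : ι → α) :
    ∫ a, f a ∂empiricalMeasure z = (Fintype.card ι : ℝ)⁻¹ • ∑ i, f (z i) := by
  rw [empiricalMeasure, integral_smul_measure,
    integral_finsetSum_measure fun _ _ => integrable_dirac enorm_lt_top]
  simp [integral_dirac, ENNReal.toReal_inv]

lemma map_empiricalMeasure {β : Type*} [MeasurableSpace β] {f : α → β} (hf : Measurable f)
    (z : ι → α) : (empiricalMeasure z).map f = empiricalMeasure (f ∘ z) := by
  simp [empiricalMeasure, Measure.map_smul, Measure.map_finset_sum' hf.aemeasurable,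
    Measure.map_dirac' hf]

end EmpiricalMeasure

lemma empMeas_eq_empiricalMeasure (N : ℕ) (x : Fin N → ℝ) : empMeas N x = empiricalMeasure x := by
  simp [empMeas, empiricalMeasure]

lemma P1_empiricalMeasure {ι : Type*} [Fintype ι] [Nonempty ι] (x : ι → ℝ) :
    P1 (empiricalMeasure x) :=
  ⟨inferInstance, integrable_empiricalMeasure _ x⟩

lemma W1_le_integral_of_coupling {μ ν : Measure ℝ} (γ : Measure (ℝ × ℝ)) [IsProbabilityMeasure γ]
    (hμ : γ.fst = μ) (hν : γ.snd = ν) : W1 μ ν ≤ ∫ p, |p.1 - p.2| ∂γ :=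
  csInf_le ⟨0, fun _ ⟨_, _, _, _, hc⟩ => hc ▸ integral_nonneg fun _ => abs_nonneg _⟩
    ⟨γ, inferInstance, hμ, hν, rfl⟩

lemma W1_empiricalMeasure_le {ι : Type*} [Fintype ι] [Nonempty ι] (x y : ι → ℝ) :
    W1 (empiricalMeasure x) (empiricalMeasure y) ≤ (∑ i, |x i - y i|) / Fintype.card ι := by
  have hcoupling := W1_le_integral_of_coupling (empiricalMeasure fun i => (x i, y i))
    (map_empiricalMeasure measurable_fst _) (map_empiricalMeasure measurable_snd _)
  rwa [integral_empiricalMeasure, smul_eq_mul, inv_mul_eq_div] at hcoupling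

lemma Real.sign_mul_abs (r : ℝ) : sign r * |r| = r := by
  rcases lt_trichotomy r 0 with hr | rfl | hr
  · rw [sign_of_neg hr, abs_of_neg hr]; ring
  · simp
  · rw [sign_of_pos hr, abs_of_pos hr]; ring

lemma mul_le_mul_abs_of_mul_sign_le {u r c : ℝ} (h : u * sign r ≤ c) : u * r ≤ c * |r| := by
  calc u * r = u * sign r * |r| := by rw [mul_assoc, Real.sign_mul_abs]
    _ ≤ c * |r| := mul_le_mul_of_nonneg_right h (abs_nonneg r)

lemma sum_mean_add_mul_le_two_mul_sum_sq {ι : Type*} [Fintype ι] (a : ι → ℝ) :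
    ∑ i, ((∑ j, a j) / Fintype.card ι + a i) * a i ≤ 2 * ∑ i, a i ^ 2 := by
  have hCauchySchwarz : (∑ j, a j) ^ 2 / Fintype.card ι ≤ ∑ i, a i ^ 2 :=
    div_le_of_le_mul₀ (Nat.cast_nonneg _) (Finset.sum_nonneg fun _ _ => sq_nonneg _)
      (by simpa [mul_comm] using sq_sum_le_card_mul_sum_sq (s := Finset.univ) (f := a))
  calc ∑ i, ((∑ j, a j) / Fintype.card ι + a i) * a i
      = (∑ j, a j) ^ 2 / Fintype.card ι + ∑ i, a i ^ 2 := by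
        simp only [add_mul, Finset.sum_add_distrib, ← Finset.mul_sum, sq]
        ring
    _ ≤ 2 * ∑ i, a i ^ 2 := by linarith

theorem particle_drift_one_sided_estimate_general (N : ℕ) (Kb : ℝ) (hKb : 0 ≤ Kb)
    (b : ℝ → Measure ℝ → ℝ)
    (hb : ∀ x y : ℝ, ∀ μ ν : Measure ℝ, P1 μ → P1 ν →
      (b x μ - b y ν) * Real.sign (x - y) ≤ Kb * (W1 μ ν + |x - y|))
    (bhat : (Fin N → ℝ) → Fin N → ℝ)
    (hbhat : ∀ x : Fin N → ℝ, ∀ i : Fin N, bhat x i = b (x i) (empMeas N x)) :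
    ∀ x y : Fin N → ℝ,
      (∑ i : Fin N, (bhat x i - bhat y i) * (x i - y i)) ≤
        2 * Kb * ∑ i : Fin N, |x i - y i| ^ 2 := by
  intro x y
  set a : Fin N → ℝ := fun i => |x i - y i|
  have hparticle (i : Fin N) : (bhat x i - bhat y i) * (x i - y i) ≤
      Kb * ((∑ j, a j) / Fintype.card (Fin N) + a i) * a i := by
    have : Nonempty (Fin N) := ⟨i⟩
    rw [hbhat, hbhat, empMeas_eq_empiricalMeasure, empMeas_eq_empiricalMeasure]
    calc _ ≤ Kb * (W1 (empiricalMeasure x) (empiricalMeasure y) + a i) * a i :=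
          mul_le_mul_abs_of_mul_sign_le
            (hb _ _ _ _ (P1_empiricalMeasure x) (P1_empiricalMeasure y))
      _ ≤ _ := by gcongr; exact W1_empiricalMeasure_le x y
  calc ∑ i, (bhat x i - bhat y i) * (x i - y i)
      ≤ ∑ i, Kb * ((∑ j, a j) / Fintype.card (Fin N) + a i) * a i :=
        Finset.sum_le_sum fun i _ => hparticle i
    _ = Kb * ∑ i, ((∑ j, a j) / Fintype.card (Fin N) + a i) * a i := by
        simp only [mul_assoc, Finset.mul_sum]
    _ ≤ Kb * (2 * ∑ i, a i ^ 2) := by gcongr; exact sum_mean_add_mul_le_two_mul_sum_sq a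
    _ = 2 * Kb * ∑ i, a i ^ 2 := by ring

/-- One-sided Lipschitz estimate for the lifted drift of the particle system. -/
theorem particle_drift_one_sided_estimate (N : ℕ) (hN : 1 ≤ N) (Kb : ℝ) (hKb : 0 ≤ Kb)
    (b : ℝ → Measure ℝ → ℝ)
    (hb : ∀ x y : ℝ, ∀ μ ν : Measure ℝ, P1 μ → P1 ν →
      (b x μ - b y ν) * Real.sign (x - y) ≤ Kb * (W1 μ ν + |x - y|))
    (bhat : (Fin N → ℝ) → Fin N → ℝ)
    (hbhat : ∀ x : Fin N → ℝ, ∀ i : Fin N, bhat x i = b (x i) (empMeas N x)) :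
    ∀ x y : Fin N → ℝ,
      (∑ i : Fin N, (bhat x i - bhat y i) * (x i - y i)) ≤
        2 * Kb * ∑ i : Fin N, |x i - y i| ^ 2 :=
  particle_drift_one_sided_estimate_general N Kb hKb b hb bhat hbhat
end

section
/- Let μ, ν be probability measures on a measurable space (E,ℰ). Then ‖μ − ν‖_var² ≤ 2·Ent(ν|μ), where ‖μ−ν‖_var = sup_{|f|≤1} |μ(f) − ν(f)| is the total variation distance and Ent(ν|μ) = ∫ log(dν/dμ) dν if ν ≪ μ and +∞ otherwise. -/
open MeasureTheory Set Real
open scoped Classical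

variable {E : Type*} [MeasurableSpace E]

/-- Total variation distance `sup_{|f|≤1} |μ(f) − ν(f)|`. -/
noncomputable def varDist (μ ν : Measure E) : ℝ :=
  sSup {c : ℝ | ∃ f : E → ℝ, Measurable f ∧ (∀ x, |f x| ≤ 1) ∧
    c = |(∫ x, f x ∂μ) - ∫ x, f x ∂ν|}

/-- Relative entropy `Ent(ν|μ)`, with value `⊤` if `ν` is not absolutely
continuous with respect to `μ` (or the entropy integral diverges). -/

noncomputable def relEnt (μ ν : Measure E) : EReal :=
  if ν ≪ μ ∧ Integrable (fun x => Real.log ((ν.rnDeriv μ x).toReal)) ν then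
    ((∫ x, Real.log ((ν.rnDeriv μ x).toReal) ∂ν : ℝ) : EReal)
  else ⊤

/-! Write `g = dν/dμ` and `klFun t = t log t - t + 1`. Testing against `|f| ≤ 1` gives
`‖μ - ν‖_var ≤ ∫ |g - 1| dμ`, while `Ent(ν|μ) = ∫ klFun g dμ`. The function
`(2t + 4) klFun t - 3 (t - 1)²` is convex on `[0, ∞)` with a critical point at `t = 1`, hence
nonnegative; combined with AM-GM this yields `2c |g - 1| ≤ c² (2g + 4)/3 + klFun g` for every real
`c`. Integrating (`∫ g dμ = 1`) gives `2cV ≤ 2c² + Ent(ν|μ)` for `V = ∫ |g - 1| dμ`, and `c = V/2`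
gives `V² ≤ 2 Ent(ν|μ)`. -/

open InformationTheory

lemma three_mul_sq_sub_one_le_mul_klFun {t : ℝ} (ht : 0 ≤ t) :
    3 * (t - 1) ^ 2 ≤ (2 * t + 4) * klFun t := by
  set φ : ℝ → ℝ := fun t ↦ (2 * t + 4) * klFun t - 3 * (t - 1) ^ 2
  set φ' : ℝ → ℝ := fun t ↦ 2 * klFun t + (2 * t + 4) * log t - 6 * (t - 1)
  have hφ : ∀ x ≠ 0, HasDerivAt φ (φ' x) x := fun x hx ↦ by
    refine (((((hasDerivAt_id x).const_mul 2).add_const 4).mul (hasDerivAt_klFun hx)).sub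
      ((((hasDerivAt_id x).sub_const 1).pow 2).const_mul 3)).congr_deriv ?_
    simp only [φ', id]
    ring
  have hφ' : ∀ x ≠ 0, HasDerivAt φ' (4 * (log x + x⁻¹ - 1)) x := fun x hx ↦ by
    refine (((hasDerivAt_klFun hx).const_mul 2).add ((((hasDerivAt_id x).const_mul 2).add_const
      4).mul (hasDerivAt_log hx))).sub (((hasDerivAt_id x).sub_const 1).const_mul 6)
      |>.congr_deriv ?_
    simp only [id]
    field_simp
    ring
  have hconvex : ConvexOn ℝ (Ici 0) φ := by
    refine convexOn_of_hasDerivWithinAt2_nonneg (convex_Ici 0) (by fun_prop)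
      (fun x hx ↦ (hφ x ?_).hasDerivWithinAt) (fun x hx ↦ (hφ' x ?_).hasDerivWithinAt)
      (fun x hx ↦ ?_) <;> rw [interior_Ici] at hx
    · exact (mem_Ioi.mp hx).ne'
    · exact (mem_Ioi.mp hx).ne'
    have := log_le_sub_one_of_pos (inv_pos.mpr (mem_Ioi.mp hx))
    rw [log_inv] at this
    linarith
  have hmin : IsMinOn φ (Ici 0) 1 := by
    refine hconvex.isMinOn_of_rightDeriv_eq_zero (by simp) ?_
    rw [(hφ 1 one_ne_zero).hasDerivWithinAt.derivWithin (uniqueDiffWithinAt_Ioi 1)]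
    simp [φ', klFun_one]
  have : φ 1 ≤ φ t := hmin (mem_Ici.mpr ht)
  simp only [φ, klFun_one] at this
  linarith

lemma two_mul_mul_abs_sub_one_le_add_klFun {t : ℝ} (ht : 0 ≤ t) (c : ℝ) :
    2 * c * |t - 1| ≤ c ^ 2 * (2 * t + 4) / 3 + klFun t := by
  have hkl := three_mul_sq_sub_one_le_mul_klFun ht
  have hsq : |t - 1| ^ 2 = (t - 1) ^ 2 := sq_abs _
  have hamgm := sq_nonneg (c * (2 * t + 4) - 3 * |t - 1|)
  rw [← mul_le_mul_iff_of_pos_left (by positivity : 0 < 3 * (2 * t + 4))]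
  nlinarith

section Measure

variable {μ ν : Measure E}

lemma sq_integral_abs_sub_one_le_two_mul_integral_klFun [IsProbabilityMeasure μ] {g : E → ℝ}
    (hg_nonneg : ∀ᵐ x ∂μ, 0 ≤ g x) (hg : Integrable g μ) (hg_one : ∫ x, g x ∂μ = 1)
    (hkl : Integrable (fun x ↦ klFun (g x)) μ) :
    (∫ x, |g x - 1| ∂μ) ^ 2 ≤ 2 * ∫ x, klFun (g x) ∂μ := by
  set V := ∫ x, |g x - 1| ∂μ
  have hlin : Integrable (fun x ↦ (2 * g x + 4) / 3) μ :=
    ((hg.const_mul 2).add (integrable_const 4)).div_const 3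
  have key : ∀ c : ℝ, 2 * c * V ≤ 2 * c ^ 2 + ∫ x, klFun (g x) ∂μ := fun c ↦
    calc 2 * c * V = ∫ x, 2 * c * |g x - 1| ∂μ := (integral_const_mul _ _).symm
      _ ≤ ∫ x, (c ^ 2 * ((2 * g x + 4) / 3) + klFun (g x)) ∂μ := by
        refine integral_mono_ae (((hg.sub (integrable_const 1)).abs).const_mul _)
          ((hlin.const_mul _).add hkl) (hg_nonneg.mono fun x hx ↦ ?_)
        simpa only [mul_div_assoc] using two_mul_mul_abs_sub_one_le_add_klFun hx c
      _ = 2 * c ^ 2 + ∫ x, klFun (g x) ∂μ := by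
        rw [integral_add (hlin.const_mul _) hkl, integral_const_mul, integral_div,
          integral_add (hg.const_mul 2) (integrable_const 4), integral_const_mul, hg_one]
        simp only [mul_one, integral_const, probReal_univ, smul_eq_mul, one_mul, add_left_inj]
        ring
  nlinarith [key (V / 2)]

lemma abs_integral_sub_integral_le_integral_abs_rnDeriv_sub_one [IsFiniteMeasure μ]
    [IsFiniteMeasure ν] (hνμ : ν ≪ μ) {f : E → ℝ} (hf : Measurable f) (hf_le : ∀ x, |f x| ≤ 1) :
    |∫ x, f x ∂μ - ∫ x, f x ∂ν| ≤ ∫ x, |(ν.rnDeriv μ x).toReal - 1| ∂μ := by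
  have hf_int : Integrable f μ := Integrable.of_bound hf.aestronglyMeasurable 1 (ae_of_all _ hf_le)
  have hgf_int : Integrable (fun x ↦ (ν.rnDeriv μ x).toReal * f x) μ :=
    Measure.integrable_toReal_rnDeriv.mul_bdd hf.aestronglyMeasurable (ae_of_all _ hf_le)
  rw [← integral_rnDeriv_smul hνμ]
  simp only [smul_eq_mul]
  rw [← integral_sub hf_int hgf_int]
  refine (abs_integral_le_integral_abs).trans (integral_mono (hf_int.sub hgf_int).abs
    (Measure.integrable_toReal_rnDeriv.sub (integrable_const 1)).abs fun x ↦ ?_)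
  calc |f x - (ν.rnDeriv μ x).toReal * f x| = |f x| * |(ν.rnDeriv μ x).toReal - 1| := by
        rw [← abs_mul, ← abs_neg]
        ring_nf
    _ ≤ |(ν.rnDeriv μ x).toReal - 1| := mul_le_of_le_one_left (abs_nonneg _) (hf_le x)

lemma varDist_nonneg : 0 ≤ varDist μ ν :=
  Real.sSup_nonneg (by rintro _ ⟨f, -, -, rfl⟩; exact abs_nonneg _)

lemma varDist_le_integral_abs_rnDeriv_sub_one [IsFiniteMeasure μ] [IsFiniteMeasure ν]
    (hνμ : ν ≪ μ) : varDist μ ν ≤ ∫ x, |(ν.rnDeriv μ x).toReal - 1| ∂μ :=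
  Real.sSup_le
    (fun _ ⟨_, hf, hf_le, hc⟩ ↦
      hc ▸ abs_integral_sub_integral_le_integral_abs_rnDeriv_sub_one hνμ hf hf_le)
    (integral_nonneg fun _ ↦ abs_nonneg _)

lemma sq_varDist_le_two_mul_integral_llr [IsProbabilityMeasure μ] [IsProbabilityMeasure ν]
    (hνμ : ν ≪ μ) (h_int : Integrable (llr ν μ) ν) :
    varDist μ ν ^ 2 ≤ 2 * ∫ x, llr ν μ x ∂ν := by
  have hkl : ∫ x, klFun (ν.rnDeriv μ x).toReal ∂μ = ∫ x, llr ν μ x ∂ν := by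
    simp [integral_klFun_rnDeriv hνμ h_int]
  calc varDist μ ν ^ 2 ≤ (∫ x, |(ν.rnDeriv μ x).toReal - 1| ∂μ) ^ 2 :=
        pow_le_pow_left₀ varDist_nonneg (varDist_le_integral_abs_rnDeriv_sub_one hνμ) 2
    _ ≤ 2 * ∫ x, klFun (ν.rnDeriv μ x).toReal ∂μ :=
        sq_integral_abs_sub_one_le_two_mul_integral_klFun
          (ae_of_all _ fun _ ↦ ENNReal.toReal_nonneg) Measure.integrable_toReal_rnDeriv (by simp [Measure.integral_toReal_rnDeriv hνμ])
          ((integrable_klFun_rnDeriv_iff hνμ).mpr h_int)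
    _ = 2 * ∫ x, llr ν μ x ∂ν := by rw [hkl]

end Measure

/-- Pinsker's inequality: `‖μ − ν‖_var² ≤ 2 Ent(ν|μ)`. -/
theorem pinsker_inequality (μ ν : Measure E)
    [IsProbabilityMeasure μ] [IsProbabilityMeasure ν] :
    ((varDist μ ν ^ 2 : ℝ) : EReal) ≤ 2 * relEnt μ ν := by
  unfold relEnt
  split_ifs with h
  · exact (EReal.coe_le_coe_iff.mpr (sq_varDist_le_two_mul_integral_llr h.1 h.2)).trans_eq
      (EReal.coe_mul 2 _)
  · rw [EReal.mul_top_of_pos two_pos]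
    exact le_top
end
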